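/- arXiv:2509.17774 — 4 statements merged into one kernel-verified Lean document; each statement's English description precedes it below -/
import Mathlib

section
/- For every integer r ≥ 1 there exists a boolean classification function on 2r+1 binary features, computed by a decision tree with at most 6r+3 nodes, such that the function has at least 2^r distinct prime implicants for class 1. -/
/-- A term (conjunction of literals) over `n` boolean variables: each variable is
either unconstrained (`none`) or constrained to a value (`some b`). -/
def satisfiesTerm {n : ℕ} (t : Fin n → Option Bool) (x : Fin n → Bool) : Prop :=
  ∀ i b, t i = some b → x i = b

/-- `t` is an implicant of `f`: every assignment satisfying `t` satisfies `f`. -/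
def Implicant {n : ℕ} (t : Fin n → Option Bool) (f : (Fin n → Bool) → Bool) : Prop :=
  ∀ x, satisfiesTerm t x → f x = true

/-- `t'` is a subterm of `t`: the literal set of `t'` is a subset of that of `t`. -/
def Subterm {n : ℕ} (t' t : Fin n → Option Bool) : Prop :=
  ∀ i b, t' i = some b → t i = some b

/-- A prime implicant: an implicant no proper subterm of which is an implicant. -/
def PrimeImplicant {n : ℕ} (t : Fin n → Option Bool) (f : (Fin n → Bool) → Bool) : Prop :=
  Implicant t f ∧ ∀ t', Subterm t' t → t' ≠ t → ¬ Implicant t' f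

/-- Binary decision trees over `n` binary features with classes in `K`. -/
inductive DT (n : ℕ) (K : Type) where
  | leaf (c : K)
  | node (i : Fin n) (l r : DT n K)

def DT.eval {n : ℕ} {K : Type} : DT n K → (Fin n → Bool) → K
  | .leaf c, _ => c
  | .node i l r, x => if x i then r.eval x else l.eval x

/-- Number of nodes of a decision tree. -/
def DT.size {n : ℕ} {K : Type} : DT n K → ℕ
  | .leaf _ => 1
  | .node _ l r => 1 + l.size + r.size

/-! ### Auxiliary construction -/

/-- Extension of an assignment to all of ℕ. -/
def Xe {n : ℕ} (x : Fin n → Bool) (i : ℕ) : Bool :=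
  if h : i < n then x ⟨i, h⟩ else false

lemma Xe_lt {n : ℕ} (x : Fin n → Bool) {i : ℕ} (h : i < n) :
    Xe x i = x ⟨i, h⟩ := dif_pos h

/-- `gox r X m j` scans positions 2j, 2(j+1), … (m steps); returns `X (2k+1)` for the
first `k` with `X (2k) = true`, else `X (2r)`. -/
def gox (r : ℕ) (X : ℕ → Bool) : ℕ → ℕ → Bool
  | 0, _ => X (2*r)
  | m+1, j => if X (2*j) then X (2*j+1) else gox r X m (j+1)

def myf (r : ℕ) (x : Fin (2*r+1) → Bool) : Bool := gox r (Xe x) r 0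

def build (r : ℕ) : (m : ℕ) → (j : ℕ) → (j + m = r) → DT (2*r+1) Bool
  | 0, _, _ => .node ⟨2*r, by omega⟩ (.leaf false) (.leaf true)
  | m+1, j, h => .node ⟨2*j, by omega⟩ (build r m (j+1) (by omega))
      (.node ⟨2*j+1, by omega⟩ (.leaf false) (.leaf true))

lemma build_size (r : ℕ) : ∀ m j h, (build r m j h).size = 4*m + 3
  | 0, j, h => rfl
  | m+1, j, h => by
      simp only [build, DT.size, build_size r m (j+1)]
      omega

lemma build_eval (r : ℕ) : ∀ m j h x, (build r m j h).eval x = gox r (Xe x) m j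
  | 0, j, h, x => by
      simp only [build, DT.eval, gox, Xe_lt x (show 2*r < 2*r+1 by omega)]
      cases x ⟨2*r, by omega⟩ <;> simp
  | m+1, j, h, x => by
      simp only [build, DT.eval, gox, build_eval r m (j+1) (by omega) x,
        Xe_lt x (show 2*j < 2*r+1 by omega), Xe_lt x (show 2*j+1 < 2*r+1 by omega)]
      cases x ⟨2*j, by omega⟩ <;> simp

lemma gox_eq_true (r : ℕ) (X : ℕ → Bool) :
    ∀ m j, (∀ i, j ≤ i → i < j + m → X (2*i) = true → X (2*i+1) = true) →
      X (2*r) = true → gox r X m j = true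
  | 0, j, _, hz => hz
  | m+1, j, h, hz => by
      simp only [gox]
      by_cases hx : X (2*j) = true
      · rw [if_pos hx]; exact h j le_rfl (by omega) hx
      · rw [if_neg hx]
        exact gox_eq_true r X m (j+1) (fun i h1 h2 => h i (by omega) (by omega)) hz

lemma gox_eq_at (r : ℕ) (X : ℕ → Bool) :
    ∀ m j k, j ≤ k → k < j + m → (∀ i, j ≤ i → i < k → X (2*i) = false) →
      X (2*k) = true → gox r X m j = X (2*k+1)
  | 0, j, k, h1, h2, _, _ => absurd h2 (by omega)
  | m+1, j, k, h1, h2, h3, h4 => by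
      simp only [gox]
      rcases eq_or_lt_of_le h1 with rfl | hlt
      · rw [if_pos h4]
      · rw [if_neg (by rw [h3 j le_rfl hlt]; simp)]
        exact gox_eq_at r X m (j+1) k (by omega) (by omega)
          (fun i hi1 hi2 => h3 i (by omega) hi2) h4

lemma gox_eq_z (r : ℕ) (X : ℕ → Bool) :
    ∀ m j, (∀ i, j ≤ i → i < j + m → X (2*i) = false) → gox r X m j = X (2*r)
  | 0, j, _ => rfl
  | m+1, j, h => by
      simp only [gox]
      rw [if_neg (by rw [h j le_rfl (by omega)]; simp)]
      exact gox_eq_z r X m (j+1) (fun i h1 h2 => h i (by omega) (by omega))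

/-- The prime-implicant terms. -/
def tK (r : ℕ) (K : Fin r → Bool) : Fin (2*r+1) → Option Bool :=
  fun i => if h : i.val = 2*r then some true
    else if h2 : i.val % 2 = 0 then
      (if K ⟨i.val/2, by have := i.isLt; omega⟩ = true then none else some false)
    else (if K ⟨i.val/2, by have := i.isLt; omega⟩ = true then some true else none)

lemma tK_at_z (r : ℕ) (K : Fin r → Bool) : tK r K ⟨2*r, by omega⟩ = some true := by
  simp [tK]

lemma tK_at_even (r : ℕ) (K : Fin r → Bool) (k : ℕ) (hk : k < r) :
    tK r K ⟨2*k, by omega⟩ = if K ⟨k, hk⟩ = true then none else some false := by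
  rw [tK]
  rw [dif_neg (show ¬(2*k = 2*r) by omega), dif_pos (show (2*k) % 2 = 0 by omega)]
  have h2 : (2*k)/2 = k := by omega
  simp only [h2]

lemma tK_at_odd (r : ℕ) (K : Fin r → Bool) (k : ℕ) (hk : k < r) :
    tK r K ⟨2*k+1, by omega⟩ = if K ⟨k, hk⟩ = true then some true else none := by
  rw [tK]
  rw [dif_neg (show ¬(2*k+1 = 2*r) by omega), dif_neg (show ¬((2*k+1) % 2 = 0) by omega)]
  have h2 : (2*k+1)/2 = k := by omega
  simp only [h2]


lemma tK_inj (r : ℕ) : Function.Injective (tK r) := by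
  intro K K' h
  funext k
  have hk := k.isLt
  have hc := congrFun h ⟨2*k.val+1, by omega⟩
  rw [tK_at_odd r K k.val hk, tK_at_odd r K' k.val hk] at hc
  simp only [Fin.eta] at hc
  cases hK : K k <;> cases hK' : K' k <;> simp_all

lemma tK_implicant (r : ℕ) (K : Fin r → Bool) : Implicant (tK r K) (myf r) := by
  intro x hx
  apply gox_eq_true
  · intro i h0 hi hxi
    have hir : i < r := by omega
    rw [Xe_lt x (show 2*i+1 < 2*r+1 by omega)]
    by_cases hK : K ⟨i, hir⟩ = true
    · exact hx ⟨2*i+1, by omega⟩ true (by rw [tK_at_odd r K i hir, if_pos hK])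
    · have h1 := hx ⟨2*i, by omega⟩ false (by rw [tK_at_even r K i hir, if_neg hK])
      rw [Xe_lt x (show 2*i < 2*r+1 by omega)] at hxi
      rw [h1] at hxi
      exact absurd hxi (by simp)
  · rw [Xe_lt x (show 2*r < 2*r+1 by omega)]
    exact hx ⟨2*r, by omega⟩ true (tK_at_z r K)

lemma tK_prime (r : ℕ) (hr : 1 ≤ r) (K : Fin r → Bool) :
    PrimeImplicant (tK r K) (myf r) := by
  refine ⟨tK_implicant r K, ?_⟩
  intro t' hsub hne hImp
  have hex : ∃ i, t' i = none ∧ tK r K i ≠ none := by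
    by_contra hcon
    push_neg at hcon
    apply hne
    funext i
    rcases h' : t' i with _ | b
    · exact (hcon i h').symm
    · exact (hsub i b h').symm
  obtain ⟨i0, hi0n, hi0s⟩ := hex
  by_cases hz0 : i0.val = 2*r
  · -- the literal z was dropped
    set x : Fin (2*r+1) → Bool := fun i => decide (i.val % 2 = 1) with hxdef
    have hsat : satisfiesTerm t' x := by
      intro j b hj
      have hjK := hsub j b hj
      by_cases hz : j.val = 2*r
      · have hji : j = i0 := Fin.ext (by omega)
        rw [hji, hi0n] at hj
        exact absurd hj (by simp)
      · rw [tK, dif_neg hz] at hjK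
        by_cases he : j.val % 2 = 0
        · rw [dif_pos he] at hjK
          by_cases hK : K ⟨j.val/2, by have := j.isLt; omega⟩ = true
          · rw [if_pos hK] at hjK; exact absurd hjK (by simp)
          · rw [if_neg hK] at hjK
            have hb : b = false := by simpa using hjK.symm
            simp [hxdef, hb, he]
        · rw [dif_neg he] at hjK
          by_cases hK : K ⟨j.val/2, by have := j.isLt; omega⟩ = true
          · rw [if_pos hK] at hjK
            have hb : b = true := by simpa using hjK.symm
            simp [hxdef, hb]
            omega
          · rw [if_neg hK] at hjK; exact absurd hjK (by simp)
    have hf : myf r x = false := by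
      rw [myf, gox_eq_z r (Xe x) r 0 ?_]
      · rw [Xe_lt x (show 2*r < 2*r+1 by omega)]
        simp only [hxdef, decide_eq_false_iff_not]; omega
      · intro i h0 hi
        rw [Xe_lt x (show 2*i < 2*r+1 by omega)]
        simp only [hxdef, decide_eq_false_iff_not]; omega
    rw [hImp x hsat] at hf
    exact absurd hf (by simp)
  · -- a literal ¬x_k or y_k was dropped; k = i0/2
    set k : ℕ := i0.val / 2 with hkdef
    have hk : k < r := by have := i0.isLt; omega
    have hi0eq : i0.val = 2*k ∨ i0.val = 2*k+1 := by omega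
    -- the sibling position is unconstrained in tK r K
    have hsib : (i0.val = 2*k → tK r K ⟨2*k+1, by omega⟩ = none) ∧
        (i0.val = 2*k+1 → tK r K ⟨2*k, by omega⟩ = none) := by
      constructor
      · intro hcase
        have hKk : ¬ (K ⟨k, hk⟩ = true) := by
          intro hKt
          apply hi0s
          have : i0 = ⟨2*k, by omega⟩ := Fin.ext hcase
          rw [this, tK_at_even r K k hk, if_pos hKt]
        rw [tK_at_odd r K k hk, if_neg hKk]
      · intro hcase
        have hKk : K ⟨k, hk⟩ = true := by
          by_contra hKt
          apply hi0s
          have : i0 = ⟨2*k+1, by omega⟩ := Fin.ext hcase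
          rw [this, tK_at_odd r K k hk, if_neg hKt]
        rw [tK_at_even r K k hk, if_pos hKk]
    have hno : ∀ (j : Fin (2*r+1)) (b : Bool), t' j = some b →
        j.val ≠ 2*k ∧ j.val ≠ 2*k+1 := by
      intro j b hj
      constructor
      · intro hjv
        rcases hi0eq with h1 | h1
        · have : j = i0 := Fin.ext (by omega)
          rw [this, hi0n] at hj; exact absurd hj (by simp)
        · have : j = ⟨2*k, by omega⟩ := Fin.ext hjv
          have h2 := hsub j b hj
          rw [this, hsib.2 h1] at h2
          exact absurd h2 (by simp)
      · intro hjv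
        rcases hi0eq with h1 | h1
        · have : j = ⟨2*k+1, by omega⟩ := Fin.ext hjv
          have h2 := hsub j b hj
          rw [this, hsib.1 h1] at h2
          exact absurd h2 (by simp)
        · have : j = i0 := Fin.ext (by omega)
          rw [this, hi0n] at hj; exact absurd hj (by simp)
    set x : Fin (2*r+1) → Bool := fun i =>
      if i.val = 2*k then true else if i.val = 2*k+1 then false
      else if i.val = 2*r then true else decide (i.val % 2 = 1) with hxdef
    have hsat : satisfiesTerm t' x := by
      intro j b hj
      obtain ⟨hj1, hj2⟩ := hno j b hj
      have hjK := hsub j b hj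
      by_cases hz : j.val = 2*r
      · rw [tK, dif_pos hz] at hjK
        have hb : b = true := by simpa using hjK.symm
        show x j = b
        simp only [hxdef]
        rw [if_neg hj1, if_neg hj2, if_pos hz, hb]
      · rw [tK, dif_neg hz] at hjK
        by_cases he : j.val % 2 = 0
        · rw [dif_pos he] at hjK
          by_cases hK : K ⟨j.val/2, by have := j.isLt; omega⟩ = true
          · rw [if_pos hK] at hjK; exact absurd hjK (by simp)
          · rw [if_neg hK] at hjK
            have hb : b = false := by simpa using hjK.symm
            show x j = b
            simp only [hxdef]
            rw [if_neg hj1, if_neg hj2, if_neg hz, hb]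
            simp only [decide_eq_false_iff_not]; omega
        · rw [dif_neg he] at hjK
          by_cases hK : K ⟨j.val/2, by have := j.isLt; omega⟩ = true
          · rw [if_pos hK] at hjK
            have hb : b = true := by simpa using hjK.symm
            show x j = b
            simp only [hxdef]
            rw [if_neg hj1, if_neg hj2, if_neg hz, hb]
            simp only [decide_eq_true_eq]; omega
          · rw [if_neg hK] at hjK; exact absurd hjK (by simp)
    have hf : myf r x = false := by
      rw [myf, gox_eq_at r (Xe x) r 0 k (by omega) (by omega) ?_ ?_]
      · rw [Xe_lt x (show 2*k+1 < 2*r+1 by omega)]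
        simp only [hxdef]
        rw [if_neg (by omega)]
        simp
      · intro i h0 hi
        rw [Xe_lt x (show 2*i < 2*r+1 by omega)]
        simp only [hxdef]
        rw [if_neg (by omega), if_neg (by omega), if_neg (by omega)]
        simp only [decide_eq_false_iff_not]; omega
      · rw [Xe_lt x (show 2*k < 2*r+1 by omega)]
        simp only [hxdef]
        simp
    rw [hImp x hsat] at hf
    exact absurd hf (by simp)


/-- For every integer r ≥ 1 there is a boolean classification function on 2r+1
binary features, computed by a decision tree with at most 6r+3 nodes, having at
least 2^r distinct prime implicants for class 1. -/
theorem stmt2 (r : ℕ) (hr : 1 ≤ r) :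
    ∃ f : (Fin (2*r+1) → Bool) → Bool,
      (∃ T : DT (2*r+1) Bool, T.size ≤ 6*r+3 ∧ ∀ x, T.eval x = f x) ∧
      (∃ S : Finset (Fin (2*r+1) → Option Bool),
        2 ^ r ≤ S.card ∧ ∀ t ∈ S, PrimeImplicant t f) := by
  refine ⟨myf r, ⟨build r r 0 (by omega), ?_, fun x => build_eval r r 0 (by omega) x⟩, ?_⟩
  · rw [build_size]; omega
  · refine ⟨Finset.image (tK r) Finset.univ, ?_, ?_⟩
    · rw [Finset.card_image_of_injective _ (tK_inj r), Finset.card_univ]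
      simp
    · intro t ht
      rw [Finset.mem_image] at ht
      obtain ⟨K, _, rfl⟩ := ht
      exact tK_prime r hr K
end

section
/- Two classifiers over the same feature space and class set are predictively equivalent if and only if for every class c, the set of abductive explanations (subset-minimal sufficient partial assignments) for class c of the first classifier equals that of the second. -/
/-- A partial assignment over features `Fin m` with domains `D i`:
at most one value per feature. -/
def PAConsistentWith {m : ℕ} {D : Fin m → Type} (A : ∀ i, Option (D i)) (x : ∀ i, D i) : Prop :=
  ∀ i v, A i = some v → x i = v

/-- `A` is a weak abductive explanation (WAXp) for class `c` of classifier `κ`: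
every point consistent with `A` is classified `c`. -/
def IsWAXp {m : ℕ} {D : Fin m → Type} {K : Type}
    (κ : (∀ i, D i) → K) (A : ∀ i, Option (D i)) (c : K) : Prop :=
  ∀ x, PAConsistentWith A x → κ x = c

/-- `A'` is a sub-assignment of `A`: its (feature, value) pairs form a subset. -/
def SubPA {m : ℕ} {D : Fin m → Type} (A' A : ∀ i, Option (D i)) : Prop :=
  ∀ i v, A' i = some v → A i = some v

/-- `A` is an abductive explanation (AXp): a subset-minimal WAXp. -/
def IsAXp {m : ℕ} {D : Fin m → Type} {K : Type}
    (κ : (∀ i, D i) → K) (A : ∀ i, Option (D i)) (c : K) : Prop :=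
  IsWAXp κ A c ∧ ∀ A', SubPA A' A → A' ≠ A → ¬ IsWAXp κ A' c

lemma exists_subAXp {m : ℕ} {D : Fin m → Type} {K : Type}
    (κ : (∀ i, D i) → K) (c : K) :
    ∀ (A : ∀ i, Option (D i)), IsWAXp κ A c →
      ∃ A', SubPA A' A ∧ IsAXp κ A' c := by
  suffices h : ∀ n (A : ∀ i, Option (D i)),
      (Finset.univ.filter fun i => (A i).isSome).card = n → IsWAXp κ A c →
      ∃ A', SubPA A' A ∧ IsAXp κ A' c by
    intro A hA; exact h _ A rfl hA
  intro n
  induction n using Nat.strong_induction_on with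
  | _ n ih =>
    intro A hcard hW
    by_cases hmin : ∀ A', SubPA A' A → A' ≠ A → ¬ IsWAXp κ A' c
    · exact ⟨A, fun i v hv => hv, hW, hmin⟩
    · push_neg at hmin
      obtain ⟨A', hsub, hne, hW'⟩ := hmin
      have hss : (Finset.univ.filter fun i => (A' i).isSome) ⊂
          (Finset.univ.filter fun i => (A i).isSome) := by
        constructor
        · intro i hi
          simp only [Finset.mem_filter, Finset.mem_univ, true_and] at hi ⊢
          obtain ⟨v, hv⟩ := Option.isSome_iff_exists.mp hi
          rw [hsub i v hv]; rfl
        · intro hcontra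
          apply hne
          funext i
          cases hA' : A' i with
          | some v => exact (hsub i v hA').symm
          | none =>
            cases hA : A i with
            | none => rfl
            | some v =>
              have : i ∈ (Finset.univ.filter fun i => (A i).isSome) := by
                simp [hA]
              have := hcontra this
              simp [hA'] at this
      have hlt : (Finset.univ.filter fun i => (A' i).isSome).card < n := by
        rw [← hcard]; exact Finset.card_lt_card hss
      obtain ⟨A'', hsub'', haxp⟩ := ih _ hlt A' rfl hW'
      exact ⟨A'', fun i v hv => hsub i v (hsub'' i v hv), haxp⟩

/-- Two classifiers are predictively equivalent iff for every class the sets of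
abductive explanations coincide. -/
theorem stmt6 {m : ℕ} {D : Fin m → Type} {K : Type}
    (κ1 κ2 : (∀ i, D i) → K) :
    (∀ x, κ1 x = κ2 x) ↔
      ∀ c : K, {A : ∀ i, Option (D i) | IsAXp κ1 A c} =
               {A : ∀ i, Option (D i) | IsAXp κ2 A c} := by
  constructor
  · intro h c
    have hκ : κ1 = κ2 := funext h
    rw [hκ]
  · intro h x
    set c := κ1 x with hc
    have hW : IsWAXp κ1 (fun i => some (x i)) c := by
      intro y hy
      have : y = x := funext fun i => hy i (x i) rfl
      rw [this]
    obtain ⟨A', hsub, haxp⟩ := exists_subAXp κ1 c (fun i => some (x i)) hW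
    have hax2 : IsAXp κ2 A' c := by
      have := h c
      have : A' ∈ {A : ∀ i, Option (D i) | IsAXp κ2 A c} := this ▸ haxp
      exact this
    have hcons : PAConsistentWith A' x := by
      intro i v hv
      have := hsub i v hv
      exact Option.some_inj.mp this
    exact (hax2.1 x hcons).symm
end

section
/- If M1 and M2 are two classifiers, A1 is a weak abductive explanation for class c1 in M1, A2 is a weak abductive explanation for class c2 ≠ c1 in M2, and A1 ∪ A2 is a consistent partial assignment, then M1 and M2 are not predictively equivalent. -/
/-- If `A1` is a WAXp for class `c1` in `M1`, `A2` is a WAXp for class `c2 ≠ c1`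
in `M2`, and `A1 ∪ A2` is consistent, then `M1`, `M2` are not predictively
equivalent. -/
theorem stmt10 {m : ℕ} {D : Fin m → Type} {K : Type}
    (M1 M2 : (∀ i, D i) → K) (A1 A2 : ∀ i, Option (D i)) (c1 c2 : K)
    (h1 : IsWAXp M1 A1 c1) (h2 : IsWAXp M2 A2 c2) (hne : c1 ≠ c2)
    (hcons : ∃ x, PAConsistentWith A1 x ∧ PAConsistentWith A2 x) :
    ¬ (∀ x, M1 x = M2 x) := by
  intro h
  obtain ⟨x, hx1, hx2⟩ := hcons
  exact hne ((h1 x hx1).symm.trans ((h x).trans (h2 x hx2)))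
end

section
/- Every boolean function f : {0,1}^n → {0,1} with f not identically false is equal to the disjunction of its prime implicants (the Blake canonical form represents f). -/
lemma exists_prime_sub {n : ℕ} (f : (Fin n → Bool) → Bool) :
    ∀ (k : ℕ) (t : Fin n → Option Bool),
      (Finset.univ.filter (fun i => (t i).isSome)).card ≤ k →
      Implicant t f → ∃ t', Subterm t' t ∧ PrimeImplicant t' f := by
  intro k
  induction k with
  | zero =>
    intro t hc ht
    refine ⟨t, fun i b h => h, ht, ?_⟩
    intro t' hsub hne himp
    apply hne
    funext i
    have hti : t i = none := by
      by_contra h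
      have : (t i).isSome := Option.ne_none_iff_isSome.mp h
      have : i ∈ Finset.univ.filter (fun i => (t i).isSome) := by simp [this]
      have := Finset.card_pos.mpr ⟨i, this⟩
      omega
    rw [hti]
    cases h' : t' i with
    | none => rfl
    | some b => exact absurd (hsub i b h') (by rw [hti]; simp)
  | succ k ih =>
    intro t hc ht
    by_cases hp : PrimeImplicant t f
    · exact ⟨t, fun i b h => h, hp⟩
    · have : ∃ t', Subterm t' t ∧ t' ≠ t ∧ Implicant t' f := by
        by_contra h
        push_neg at h
        exact hp ⟨ht, fun t' hs hn hi => (h t' hs hn) hi⟩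
      obtain ⟨t', hsub, hne, himp⟩ := this
      -- card strictly decreases
      have hlt : (Finset.univ.filter (fun i => (t' i).isSome)).card <
          (Finset.univ.filter (fun i => (t i).isSome)).card := by
        apply Finset.card_lt_card
        constructor
        · intro i hi
          simp only [Finset.mem_filter, Finset.mem_univ, true_and] at *
          obtain ⟨b, hb⟩ := Option.isSome_iff_exists.mp hi
          exact Option.isSome_iff_exists.mpr ⟨b, hsub i b hb⟩
        · intro hcontra
          apply hne
          funext i
          cases h' : t i with
          | none =>
            cases h'' : t' i with
            | none => rfl
            | some b => exact absurd (hsub i b h'') (by rw [h']; simp)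
          | some b =>
            have hi : i ∈ Finset.univ.filter (fun i => (t' i).isSome) := by
              apply hcontra; simp [h']
            simp only [Finset.mem_filter] at hi
            obtain ⟨c, hc'⟩ := Option.isSome_iff_exists.mp hi.2
            have := hsub i c hc'
            rw [h'] at this
            rw [hc', this]
      obtain ⟨t'', hs, hp''⟩ := ih t' (by omega) himp
      exact ⟨t'', fun i b h => hsub i b (hs i b h), hp''⟩

/-- Every boolean function that is not identically false equals the disjunction
of its prime implicants (Blake canonical form). -/
theorem stmt13 {n : ℕ} (f : (Fin n → Bool) → Bool) (hf : ∃ x, f x = true) :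
    ∀ x, f x = true ↔ ∃ t, PrimeImplicant t f ∧ satisfiesTerm t x := by
  intro x
  constructor
  · intro hx
    -- the full term of x
    set t : Fin n → Option Bool := fun i => some (x i) with ht
    have himp : Implicant t f := by
      intro y hy
      have : y = x := funext fun i => hy i (x i) rfl
      rw [this]; exact hx
    obtain ⟨t', hsub, hp⟩ := exists_prime_sub f _ t le_rfl himp
    refine ⟨t', hp, ?_⟩
    intro i b hb
    have := hsub i b hb
    simp only [ht, Option.some.injEq] at this
    rw [this]
  · rintro ⟨t, ⟨himp, _⟩, hsat⟩
    exact himp x hsat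
end
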